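/- For every integer N ≥ 3, ∫_{ℝ^N} U(x)^{2(N−1)/(N−2)} dx = (2(N−1)/(N−2)) · ∫_{ℝ^N} U(x)^{2N/(N−2)} dx. -/

import Mathlib

/-!
With `a = N(N-2)` one has `U ^ (2s/(N-2)) = (a/(a+|x|²))^s`, so both integrands are powers
`(a/(a+|x|²))^k` of one radial function, and in polar coordinates their integrals are
`|S^(N-1)| a^k J(N-1, k)` with `J(n, k) = ∫₀^∞ r^n (a+r²)^(-k) dr`. Integrating
`d/dr [r^(n+1) (a+r²)^(-k)]` over `(0, ∞)` gives `(2k - n - 1) J(n, k) = 2ka J(n, k+1)`,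
which at `n = k = N-1` is the claim.
-/

open Real MeasureTheory

/-- The Talenti instanton `U(x) = (N(N−2)/(N(N−2)+|x|²))^((N−2)/2)` on `ℝ^N`. -/
noncomputable def talenti (N : ℕ) (x : EuclideanSpace ℝ (Fin N)) : ℝ :=
  ((N : ℝ) * ((N : ℝ) - 2) / ((N : ℝ) * ((N : ℝ) - 2) + ‖x‖ ^ 2)) ^ (((N : ℝ) - 2) / 2)

open Set Filter Topology Metric Module

section Radial

variable {a : ℝ}

lemma pow_div_add_sq_pow_le_rpow (ha : 0 ≤ a) {r : ℝ} (hr : 0 < r) (n k : ℕ) :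
    r ^ n / (a + r ^ 2) ^ k ≤ r ^ ((n : ℝ) - 2 * k) := by
  calc r ^ n / (a + r ^ 2) ^ k ≤ r ^ n / (r ^ 2) ^ k := by gcongr; linarith
    _ = r ^ ((n : ℝ) - 2 * k) := by
      rw [rpow_sub hr, ← pow_mul, rpow_natCast, ← rpow_natCast r (2 * k)]
      push_cast; rfl

lemma continuous_pow_div_add_sq_pow (ha : 0 < a) (n k : ℕ) :
    Continuous fun r : ℝ => r ^ n / (a + r ^ 2) ^ k :=
  (continuous_pow n).div (by fun_prop) fun r => by positivity

lemma integrableOn_Ioi_pow_div_add_sq_pow (ha : 0 < a) {n k : ℕ} (h : n + 2 ≤ 2 * k) :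
    IntegrableOn (fun r : ℝ => r ^ n / (a + r ^ 2) ^ k) (Ioi 0) := by
  have hcont := continuous_pow_div_add_sq_pow ha n k
  have htail : IntegrableOn (fun r : ℝ => r ^ n / (a + r ^ 2) ^ k) (Ioi 1) := by
    have h' : (n : ℝ) + 2 ≤ 2 * k := by exact_mod_cast h
    refine (integrableOn_Ioi_rpow_of_lt (a := (n : ℝ) - 2 * k) (by linarith) one_pos).mono'
      hcont.aestronglyMeasurable.restrict ?_
    filter_upwards [ae_restrict_mem measurableSet_Ioi] with r (hr : 1 < r)
    rw [norm_of_nonneg (by positivity)]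
    exact pow_div_add_sq_pow_le_rpow ha.le (one_pos.trans hr) n k
  rw [← Ioc_union_Ioi_eq_Ioi zero_le_one]
  exact hcont.integrableOn_Ioc.union htail

lemma tendsto_pow_div_add_sq_pow_atTop (ha : 0 ≤ a) {n k : ℕ} (h : n < 2 * k) :
    Tendsto (fun r : ℝ => r ^ n / (a + r ^ 2) ^ k) atTop (𝓝 0) := by
  have h' : (n : ℝ) < 2 * k := by exact_mod_cast h
  have hlim := tendsto_rpow_neg_atTop (sub_pos.2 h')
  rw [neg_sub] at hlim
  refine squeeze_zero' ?_ ?_ hlim <;> filter_upwards [eventually_gt_atTop 0] with r hr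
  · positivity
  · exact pow_div_add_sq_pow_le_rpow ha hr n k

lemma hasDerivAt_pow_succ_div_add_sq_pow (ha : 0 < a) (n k : ℕ) (r : ℝ) :
    HasDerivAt (fun r : ℝ => r ^ (n + 1) / (a + r ^ 2) ^ k)
      (((n : ℝ) + 1 - 2 * k) * (r ^ n / (a + r ^ 2) ^ k)
        + 2 * k * a * (r ^ n / (a + r ^ 2) ^ (k + 1))) r := by
  have hden := ((hasDerivAt_pow 2 r).const_add a).fun_pow k
  refine ((hasDerivAt_pow (n + 1) r).fun_div hden (by positivity)).congr_deriv ?_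
  rcases k with _ | k
  · simp
  · field_simp
    push_cast
    ring

lemma integral_Ioi_pow_div_add_sq_pow_succ (ha : 0 < a) {n k : ℕ} (h : n + 2 ≤ 2 * k) :
    ((2 * k : ℝ) - n - 1) * ∫ r in Ioi 0, r ^ n / (a + r ^ 2) ^ k
      = 2 * k * a * ∫ r in Ioi 0, r ^ n / (a + r ^ 2) ^ (k + 1) := by
  have hk := integrableOn_Ioi_pow_div_add_sq_pow ha h
  have hk1 := integrableOn_Ioi_pow_div_add_sq_pow ha (n := n) (k := k + 1) (by omega)
  have hftc := integral_Ioi_of_hasDerivAt_of_tendsto'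
    (fun r _ => hasDerivAt_pow_succ_div_add_sq_pow ha n k r)
    ((hk.const_mul _).add (hk1.const_mul _)) (tendsto_pow_div_add_sq_pow_atTop ha.le (by omega))
  rw [integral_add (hk.const_mul _) (hk1.const_mul _), integral_const_mul, integral_const_mul]
    at hftc
  simp only [zero_pow n.succ_ne_zero, zero_div, sub_zero] at hftc
  linarith

end Radial

section Haar

variable {E : Type*} [NormedAddCommGroup E] [NormedSpace ℝ E] [Nontrivial E] [FiniteDimensional ℝ E]
  [MeasurableSpace E] [BorelSpace E] (μ : Measure E) [μ.IsAddHaarMeasure]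

lemma integral_div_add_norm_sq_pow (a : ℝ) (k : ℕ) :
    ∫ x, (a / (a + ‖x‖ ^ 2)) ^ k ∂μ
      = finrank ℝ E * μ.real (ball 0 1) *
          (a ^ k * ∫ r in Ioi 0, r ^ (finrank ℝ E - 1) / (a + r ^ 2) ^ k) := by
  rw [integral_fun_norm_addHaar μ fun r => (a / (a + r ^ 2)) ^ k]
  simp only [nsmul_eq_mul, smul_eq_mul, div_pow, mul_div_left_comm _ (a ^ k), integral_const_mul]
  ring

lemma integral_div_add_norm_sq_pow_succ {a : ℝ} (ha : 0 < a) {k : ℕ} (hk : finrank ℝ E < 2 * k) :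
    ((2 * k : ℝ) - finrank ℝ E) * ∫ x, (a / (a + ‖x‖ ^ 2)) ^ k ∂μ
      = 2 * k * ∫ x, (a / (a + ‖x‖ ^ 2)) ^ (k + 1) ∂μ := by
  have hdim : 0 < finrank ℝ E := finrank_pos
  have hradial := integral_Ioi_pow_div_add_sq_pow_succ ha (n := finrank ℝ E - 1) (k := k)
    (by omega)
  rw [Nat.cast_sub hdim] at hradial
  rw [integral_div_add_norm_sq_pow, integral_div_add_norm_sq_pow]
  linear_combination (finrank ℝ E * μ.real (ball 0 1) * a ^ k) * hradial

end Haar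

lemma talenti_rpow {N : ℕ} (hN : 2 < N) (x : EuclideanSpace ℝ (Fin N)) (s : ℝ) :
    talenti N x ^ (2 * s / ((N : ℝ) - 2))
      = ((N : ℝ) * (N - 2) / ((N : ℝ) * (N - 2) + ‖x‖ ^ 2)) ^ s := by
  have hN' : 0 < (N : ℝ) - 2 := by
    rw [sub_pos]; exact_mod_cast hN
  rw [talenti, ← rpow_mul (by positivity)]
  congr 1
  field_simp

theorem stmt_9 (N : ℕ) (hN : 3 ≤ N) :
    ∫ x : EuclideanSpace ℝ (Fin N), talenti N x ^ (2 * ((N : ℝ) - 1) / ((N : ℝ) - 2))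
      = (2 * ((N : ℝ) - 1) / ((N : ℝ) - 2))
          * ∫ x : EuclideanSpace ℝ (Fin N), talenti N x ^ (2 * (N : ℝ) / ((N : ℝ) - 2)) := by
  have hN1 : 1 ≤ N := by omega
  have hN2 : (0 : ℝ) < N - 2 := by
    rw [sub_pos]; exact_mod_cast hN
  have : Nontrivial (EuclideanSpace ℝ (Fin N)) :=
    Module.nontrivial_of_finrank_pos (R := ℝ) (by simp; omega)
  have key := integral_div_add_norm_sq_pow_succ (volume : Measure (EuclideanSpace ℝ (Fin N)))
    (a := (N : ℝ) * (N - 2)) (by positivity) (k := N - 1) (by simp; omega)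
  simp only [finrank_euclideanSpace_fin, Nat.sub_add_cancel hN1, ← rpow_natCast _ N,
    ← rpow_natCast _ (N - 1), Nat.cast_sub hN1, Nat.cast_one] at key
  simp only [talenti_rpow (by omega : 2 < N)]
  rw [div_mul_eq_mul_div, eq_div_iff hN2.ne']
  linear_combination key
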